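/- In any maximal outerplanar graph on n ≥ 3 vertices, for any vertex v, exactly n - 1 - deg(v) edge flips are necessary and sufficient to make v dominant (adjacent to all other vertices), where a flip replaces an internal edge xy (shared by triangles vxy-like pairs) by the other diagonal of the quadrilateral formed by the two triangles sharing xy. -/

import Mathlib

open Finset

/-- Two chords `ab` and `cd` of the polygon `0, 1, …, n-1` cross. -/
def Crossing {n : ℕ} (a b c d : Fin n) : Prop :=
  (a < c ∧ c < b ∧ b < d) ∨ (c < a ∧ a < d ∧ d < b)

/-- A maximal outerplanar graph, modelled as a triangulated polygon on the vertices
`0, 1, …, n-1` in convex position: all boundary edges are present, no two edges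
cross, and the number of edges is `2n - 3` (edge-maximality). -/
structure MaxOuterplanar (n : ℕ) [NeZero n] where
  graph : SimpleGraph (Fin n)
  boundary : ∀ i : Fin n, graph.Adj i (i + 1)
  noncross : ∀ a b c d : Fin n, graph.Adj a b → graph.Adj c d → ¬ Crossing a b c d
  maximal : graph.edgeSet.ncard = 2 * n - 3

/-- Degree of a vertex. -/
noncomputable def deg {V : Type*} (G : SimpleGraph V) (v : V) : ℕ := (G.neighborSet v).ncard

/-- A vertex adjacent to all other vertices. -/
def Dominant {V : Type*} (G : SimpleGraph V) (v : V) : Prop := ∀ u, u ≠ v → G.Adj v u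

/-- `G'` is obtained from `G` by flipping the edge `xy`, shared by the two triangles
`xyz` and `xyw`, into the other diagonal `zw` of the quadrilateral; the flip is
valid since `zw` is not already an edge. -/
def IsFlipG {V : Type*} (G G' : SimpleGraph V) : Prop :=
  ∃ x y z w : V, G.Adj x y ∧ G.Adj x z ∧ G.Adj y z ∧ G.Adj x w ∧ G.Adj y w ∧
    z ≠ w ∧ ¬ G.Adj z w ∧
    G' = SimpleGraph.fromEdgeSet ((G.edgeSet \ {s(x, y)}) ∪ {s(z, w)})

/-- `G'` is reachable from `G` by a sequence of exactly `k` edge flips. -/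
def ReachableG {V : Type*} (G G' : SimpleGraph V) (k : ℕ) : Prop :=
  ∃ L : List (SimpleGraph V), L.length = k ∧ List.Chain IsFlipG G L ∧ L.getLastD G = G'

/-!
The lower bound holds because a flip creates a single edge, so it raises the degree of `v` by at
most one, while a dominant vertex has degree `n - 1`.

For the upper bound, rotate `v` to `0`. If `0` has a non-neighbour `u`, let `a < u < b` be the
neighbours of `0` closest to `u`. No edge can cross the chord `ab`, and an outerplanar graph with
`2n - 3` edges contains every chord that crosses none of its edges (a noncrossing graph on `n`
points in convex position has at most `2n - 3` edges, as it has a vertex of degree at most two).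
So `0ab` is a triangle; if `abw` is the triangle on the other side of `ab`, the only edge crossing
`0w` is `ab`, and flipping `ab` into `0w` gives a maximal outerplanar graph in which `0` has one
more neighbour.
-/

theorem Fin.val_add_one_eq_ite {n : ℕ} [NeZero n] (i : Fin n) :
    ((i + 1 : Fin n) : ℕ) = if i.val + 1 = n then 0 else i.val + 1 := by
  rw [Fin.val_add, Fin.val_one']
  rcases n with _ | _ | n
  · exact i.elim0
  · simp
  · rw [Nat.one_mod_eq_one.2 (by omega)]
    split_ifs with h
    · rw [h, Nat.mod_self]
    · exact Nat.mod_eq_of_lt (by omega)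

theorem Sym2.eq_of_lt {α : Type*} [LinearOrder α] {a b c d : α} (h : s(a, b) = s(c, d))
    (hab : a < b) (hcd : c < d) : a = c ∧ b = d := by
  rcases Sym2.eq_iff.1 h with h | ⟨rfl, rfl⟩
  exacts [h, (lt_asymm hab hcd).elim]

theorem exists_last_lt {α : Type*} [LinearOrder α] [Fintype α] {P : α → Prop} {x b : α}
    (hx : P x) (hxb : x < b) : ∃ a, P a ∧ x ≤ a ∧ a < b ∧ ∀ c, a < c → c < b → ¬P c := by
  classical
  obtain ⟨a, ha, hmax⟩ :=
    (Finset.univ.filter fun c => P c ∧ x ≤ c ∧ c < b).exists_max_image id ⟨x, by simp [hx, hxb]⟩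
  simp only [Finset.mem_filter, Finset.mem_univ, true_and, id] at ha hmax
  exact ⟨a, ha.1, ha.2.1, ha.2.2, fun c hac hcb hc =>
    (hmax c ⟨hc, ha.2.1.trans hac.le, hcb⟩).not_gt hac⟩

theorem exists_consecutive_around {α : Type*} [LinearOrder α] [Fintype α] {P : α → Prop}
    {x u y : α} (hx : P x) (hy : P y) (hxu : x < u) (huy : u < y) (hu : ¬P u) :
    ∃ a b, P a ∧ P b ∧ a < u ∧ u < b ∧ ∀ c, a < c → c < b → ¬P c := by
  obtain ⟨a, ha, -, hau, hgap₁⟩ := exists_last_lt hx hxu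
  obtain ⟨b, hb, -, hub, hgap₂⟩ := exists_last_lt (α := αᵒᵈ) hy huy
  refine ⟨a, b, ha, hb, hau, hub, fun c hac hcb hc => ?_⟩
  rcases lt_trichotomy c u with hcu | rfl | huc
  exacts [hgap₁ c hac hcu hc, hu hc, hgap₂ c hcb huc hc]

namespace SimpleGraph

variable {V W : Type*}

def replaceEdge (G : SimpleGraph V) (e e' : Sym2 V) : SimpleGraph V :=
  fromEdgeSet (G.edgeSet \ {e} ∪ {e'})

variable {G : SimpleGraph V} {e : Sym2 V} {x y z w : V}

theorem replaceEdge_adj : (G.replaceEdge e s(z, w)).Adj x y ↔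
    (G.Adj x y ∧ s(x, y) ≠ e) ∨ (s(x, y) = s(z, w) ∧ x ≠ y) := by
  simp only [replaceEdge, fromEdgeSet_adj, Set.mem_union, Set.mem_sdiff, mem_edgeSet,
    Set.mem_singleton_iff]
  constructor
  · rintro ⟨h | h, hne⟩
    exacts [Or.inl h, Or.inr ⟨h, hne⟩]
  · rintro (h | h)
    exacts [⟨Or.inl h, h.1.ne⟩, ⟨Or.inr h.1, h.2⟩]

theorem edgeSet_replaceEdge (hzw : z ≠ w) :
    (G.replaceEdge e s(z, w)).edgeSet = insert s(z, w) (G.edgeSet \ {e}) := by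
  rw [replaceEdge, edgeSet_fromEdgeSet, Set.union_singleton, sdiff_eq_left, Set.disjoint_left]
  rintro _ (rfl | ⟨he, -⟩)
  exacts [by simpa using hzw, G.not_isDiag_of_mem_edgeSet he]

theorem ncard_edgeSet_replaceEdge [Finite V] (he : e ∈ G.edgeSet) (hzw : z ≠ w)
    (hnew : ¬G.Adj z w) : (G.replaceEdge e s(z, w)).edgeSet.ncard = G.edgeSet.ncard := by
  rw [edgeSet_replaceEdge hzw, Set.ncard_insert_of_notMem (fun h => hnew h.1),
    Set.ncard_sdiff_singleton_add_one he]

theorem neighborSet_replaceEdge_of_notMem (hz : z ∉ e) (hzw : z ≠ w) :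
    (G.replaceEdge e s(z, w)).neighborSet z = insert w (G.neighborSet z) := by
  ext u
  simp only [mem_neighborSet, replaceEdge_adj, Set.mem_insert_iff, Sym2.eq_iff]
  constructor
  · rintro (⟨h, -⟩ | ⟨⟨-, rfl⟩ | ⟨rfl, -⟩, -⟩)
    exacts [Or.inr h, Or.inl rfl, absurd rfl hzw]
  · rintro (rfl | h)
    · exact Or.inr ⟨by simp, hzw⟩
    · exact Or.inl ⟨h, fun he' => hz (he' ▸ Sym2.mem_mk_left z u)⟩

theorem exists_neighborSet_replaceEdge_subset (G : SimpleGraph V) (e : Sym2 V) (z w v : V) :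
    ∃ u, (G.replaceEdge e s(z, w)).neighborSet v ⊆ insert u (G.neighborSet v) := by
  classical
  refine ⟨if v = z then w else z, fun u hu => ?_⟩
  rw [mem_neighborSet, replaceEdge_adj, Sym2.eq_iff] at hu
  split_ifs <;> grind [mem_neighborSet]

theorem comap_replaceEdge (f : V ≃ W) (G : SimpleGraph W) (x y z w : W) :
    (G.replaceEdge s(x, y) s(z, w)).comap f =
      (G.comap f).replaceEdge s(f.symm x, f.symm y) s(f.symm z, f.symm w) := by
  ext p q
  simp only [comap_adj, replaceEdge_adj, ne_eq, Sym2.eq_iff, Equiv.eq_symm_apply,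
    f.injective.ne_iff]

theorem ncard_edgeSet_comap (f : V ≃ W) (G : SimpleGraph W) :
    (G.comap f).edgeSet.ncard = G.edgeSet.ncard :=
  Nat.card_congr (Iso.comap f G).mapEdgeSet

end SimpleGraph

section Flips

open SimpleGraph

variable {V W : Type*}

theorem deg_comap (f : V ≃ W) (G : SimpleGraph W) (v : V) : deg (G.comap f) v = deg G (f v) :=
  Set.ncard_preimage_of_injective_subset_range f.injective (f.range_eq_univ ▸ Set.subset_univ _)

theorem dominant_iff_deg_eq [Finite V] {G : SimpleGraph V} {v : V} :
    Dominant G v ↔ deg G v = Nat.card V - 1 := by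
  have hsub : G.neighborSet v ⊆ {v}ᶜ := fun u hu => (G.ne_of_adj hu).symm
  have hcard : ({v}ᶜ : Set V).ncard = Nat.card V - 1 := by
    rw [Set.ncard_compl, Set.ncard_singleton]
  rw [deg, ← hcard]
  refine ⟨fun h => congrArg Set.ncard (hsub.antisymm fun u hu => h u hu), fun h u hu => ?_⟩
  have hN : G.neighborSet v = {v}ᶜ := Set.eq_of_subset_of_ncard_le hsub h.ge
  rw [← mem_neighborSet, hN]
  exact hu

theorem deg_le_card_sub_one [Finite V] (G : SimpleGraph V) (v : V) : deg G v ≤ Nat.card V - 1 := by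
  rw [← Set.ncard_singleton v, ← Set.ncard_compl]
  exact Set.ncard_le_ncard fun _ hu => (G.ne_of_adj hu).symm

theorem IsFlipG.deg_le [Finite V] {G G' : SimpleGraph V} (h : IsFlipG G G') (v : V) :
    deg G' v ≤ deg G v + 1 := by
  obtain ⟨x, y, z, w, -, -, -, -, -, -, -, rfl⟩ := h
  obtain ⟨u, hu⟩ := G.exists_neighborSet_replaceEdge_subset s(x, y) z w v
  exact (Set.ncard_le_ncard hu).trans (Set.ncard_insert_le _ _)

theorem IsFlipG.comap (f : V ≃ W) {G G' : SimpleGraph W} (h : IsFlipG G G') :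
    IsFlipG (G.comap f) (G'.comap f) := by
  obtain ⟨x, y, z, w, hxy, hxz, hyz, hxw, hyw, hzw, hnzw, rfl⟩ := h
  refine ⟨f.symm x, f.symm y, f.symm z, f.symm w, ?_, ?_, ?_, ?_, ?_, f.symm.injective.ne hzw, ?_,
    comap_replaceEdge f G x y z w⟩ <;> simpa

theorem ReachableG.refl (G : SimpleGraph V) : ReachableG G G 0 :=
  ⟨[], rfl, List.IsChain.singleton G, rfl⟩

theorem ReachableG.cons {G₀ G₁ G : SimpleGraph V} {k : ℕ} (h₀ : IsFlipG G₀ G₁)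
    (h : ReachableG G₁ G k) : ReachableG G₀ G (k + 1) := by
  obtain ⟨L, rfl, hL, rfl⟩ := h
  exact ⟨G₁ :: L, rfl, List.isChain_cons_cons.2 ⟨h₀, hL⟩, List.getLastD_cons ..⟩

theorem ReachableG.deg_le [Finite V] {G G' : SimpleGraph V} {k : ℕ} (h : ReachableG G G' k)
    (v : V) : deg G' v ≤ deg G v + k := by
  obtain ⟨L, rfl, hL, rfl⟩ := h
  induction L generalizing G with
  | nil => simp
  | cons H L ih =>
    obtain ⟨hGH, hL⟩ := List.isChain_cons_cons.1 hL
    have := hGH.deg_le v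
    have := ih hL
    simp only [List.getLastD_cons, List.length_cons]
    omega

end Flips

namespace SimpleGraph

variable {α : Type*} [LinearOrder α] {G H : SimpleGraph α}

/-- No two edges cross when the vertices are placed in convex position in the order of `α`. -/
def IsNoncrossing (G : SimpleGraph α) : Prop :=
  ∀ ⦃a b c d⦄, G.Adj a b → G.Adj c d → a < c → c < b → b < d → False

theorem IsNoncrossing.mono (hG : G.IsNoncrossing) (hHG : H ≤ G) : H.IsNoncrossing :=
  fun _ _ _ _ hab hcd => hG (hHG hab) (hHG hcd)

theorem degree_le_two_of_adj_imp [Fintype α] [DecidableRel G.Adj] {S : Finset α} {s i : α}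
    (h : ∀ t, G.Adj s t → t = i ∨ t ∈ S ∧ s < t ∧ ∀ x ∈ S, s < x → t ≤ x) : G.degree s ≤ 2 := by
  classical
  let next := S.filter fun t => s < t ∧ ∀ x ∈ S, s < x → t ≤ x
  have hnext : #next ≤ 1 := card_le_one.2 fun t ht t' ht' => by
    simp only [next, mem_filter] at ht ht'
    exact le_antisymm (ht.2.2 t' ht'.1 ht'.2.1) (ht'.2.2 t ht.1 ht.2.1)
  have hN : G.neighborFinset s ⊆ insert i next := fun t ht => by
    rcases h t ((G.mem_neighborFinset s t).1 ht) with rfl | ht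
    exacts [mem_insert_self _ _, mem_insert_of_mem (mem_filter.2 ht)]
  calc G.degree s = #(G.neighborFinset s) := (G.card_neighborFinset_eq_degree s).symm
    _ ≤ #(insert i next) := card_le_card hN
    _ ≤ 2 := (card_insert_le _ _).trans (by omega)

theorem IsNoncrossing.exists_degree_le_two [Fintype α] [DecidableRel G.Adj]
    (hG : G.IsNoncrossing) {S : Finset α} (hS : ∀ ⦃a b⦄, G.Adj a b → a ∈ S) (hne : S.Nonempty) :
    ∃ s ∈ S, G.degree s ≤ 2 := by
  classical
  let span (i j : α) : Finset α := S.filter fun x => i < x ∧ x < j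
  let long : Finset (α × α) :=
    univ.filter fun p => G.Adj p.1 p.2 ∧ p.1 < p.2 ∧ (span p.1 p.2).Nonempty
  have mem_long {s t y : α} (hst : G.Adj s t) (hs : s < t) (hy : y ∈ S) (hsy : s < y)
      (hyt : y < t) : (s, t) ∈ long := by
    simp only [long, span, mem_filter, mem_univ, true_and]
    exact ⟨hst, hs, y, mem_filter.2 ⟨hy, hsy, hyt⟩⟩
  by_cases hlong : long.Nonempty
  · -- the first vertex `s` under a long chord `ij` spanning the fewest vertices of `S`
    -- is adjacent only to `i` and to its successor in `S`
    obtain ⟨⟨i, j⟩, hp, hmin⟩ := long.exists_min_image (fun p => #(span p.1 p.2)) hlong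
    simp only [long, span, mem_filter, mem_univ, true_and] at hp
    obtain ⟨hij, -, x, hx⟩ := hp
    simp only [mem_filter] at hx
    obtain ⟨s, hs, hsmin⟩ :=
      (S.filter (i < ·)).exists_min_image id ⟨x, mem_filter.2 ⟨hx.1, hx.2.1⟩⟩
    simp only [mem_filter, id] at hs hsmin
    have hsj : s < j := (hsmin x ⟨hx.1, hx.2.1⟩).trans_lt hx.2.2
    refine ⟨s, hs.1, degree_le_two_of_adj_imp (S := S) (i := i) fun t ht => ?_⟩
    have htS : t ∈ S := hS ht.symm
    rcases lt_trichotomy t s with hts | rfl | hst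
    · have hti : t ≤ i := not_lt.1 fun hit => (hsmin t ⟨htS, hit⟩).not_gt hts
      rcases hti.lt_or_eq with hti | rfl
      exacts [(hG ht.symm hij hti hs.2 hsj).elim, Or.inl rfl]
    · exact (G.ne_of_adj ht rfl).elim
    refine Or.inr ⟨htS, hst, fun y hy hsy => not_lt.1 fun hyt => ?_⟩
    rcases lt_or_ge j t with hjt | htj
    · exact hG hij ht hs.2 hsj hjt
    have hsub : span s t ⊂ span i j := by
      refine (ssubset_iff_of_subset fun z hz => ?_).2 ⟨s, ?_, ?_⟩ <;>
        simp only [span, mem_filter] at *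
      · exact ⟨hz.1, hs.2.trans hz.2.1, hz.2.2.trans_le htj⟩
      · exact ⟨hs.1, hs.2, hsj⟩
      · exact fun h => h.2.1.false
    exact (hmin (s, t) (mem_long ht hst hy hsy hyt)).not_gt (card_lt_card hsub)
  · -- every edge joins consecutive vertices of `S`
    obtain ⟨s, hs, hsmin⟩ := S.exists_min_image id hne
    refine ⟨s, hs, degree_le_two_of_adj_imp (S := S) (i := s) fun t ht => Or.inr ?_⟩
    have htS : t ∈ S := hS ht.symm
    have hst : s < t := (hsmin t htS).lt_of_ne (G.ne_of_adj ht)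
    exact ⟨htS, hst, fun y hy hsy => not_lt.1 fun hyt => hlong ⟨_, mem_long ht hst hy hsy hyt⟩⟩

theorem IsNoncrossing.card_edgeFinset_add_three_le [Fintype α] [DecidableRel G.Adj]
    (hG : G.IsNoncrossing) {S : Finset α} (hS : ∀ ⦃a b⦄, G.Adj a b → a ∈ S) (hS2 : 2 ≤ #S) :
    #G.edgeFinset + 3 ≤ 2 * #S := by
  classical
  induction S using Finset.strongInduction generalizing G with
  | H S ih =>
    rcases hS2.eq_or_lt with h2 | h3
    · obtain ⟨p, q, hpq, rfl⟩ := card_eq_two.1 h2.symm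
      have hE : G.edgeFinset ⊆ {s(p, q)} := by
        intro e he
        induction e using Sym2.ind with
        | _ x y =>
          have hxy := mem_edgeFinset.1 he
          have hx := hS hxy
          have hy := hS hxy.symm
          simp only [mem_insert, mem_singleton] at hx hy ⊢
          rcases hx with rfl | rfl <;> rcases hy with rfl | rfl <;>
            first | exact (G.ne_of_adj hxy rfl).elim | simp
      have := card_le_card hE
      simp only [card_singleton] at this
      omega
    · obtain ⟨s, hs, hdeg⟩ := hG.exists_degree_le_two hS (card_pos.1 (by omega))
      have hS' : ∀ ⦃a b⦄, (G.deleteIncidenceSet s).Adj a b → a ∈ S.erase s := fun a b hab => by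
        rw [deleteIncidenceSet_adj] at hab
        exact mem_erase.2 ⟨hab.2.1, hS hab.1⟩
      have := ih _ (erase_ssubset hs) (hG.mono (G.deleteIncidenceSet_le s)) hS'
        (by rw [card_erase_of_mem hs]; omega)
      rw [card_edgeFinset_deleteIncidenceSet, card_erase_of_mem hs] at this
      omega

end SimpleGraph

namespace Crossing

variable {n : ℕ} {a b c d : Fin n}

theorem symm (h : Crossing a b c d) : Crossing c d a b := Or.symm h

theorem lt_left (h : Crossing a b c d) : a < b := by rcases h with h | h <;> order

theorem lt_right (h : Crossing a b c d) : c < d := by rcases h with h | h <;> order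

theorem not_self (a b : Fin n) : ¬Crossing a b a b := by rintro (h | h) <;> exact lt_irrefl _ h.1

theorem add (h : Crossing a b c d) (v : Fin n) :
    Crossing (a + v) (b + v) (c + v) (d + v) ∨ Crossing (b + v) (a + v) (c + v) (d + v) ∨
      Crossing (a + v) (b + v) (d + v) (c + v) ∨ Crossing (b + v) (a + v) (d + v) (c + v) := by
  simp only [Crossing, Fin.lt_def, Fin.val_add_eq_ite] at *
  rcases h with h | h <;> split_ifs <;> grind

theorem ne_boundary [NeZero n] (h : Crossing a b c d) (i : Fin n) : s(c, d) ≠ s(i, i + 1) := by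
  rw [Ne, Sym2.eq_iff]
  unfold Crossing at h
  simp only [Fin.lt_def, Fin.ext_iff, Fin.val_add_one_eq_ite] at *
  split_ifs at * <;> omega

end Crossing

namespace MaxOuterplanar

open SimpleGraph

variable {n : ℕ} [NeZero n]

theorem isNoncrossing (T : MaxOuterplanar n) : T.graph.IsNoncrossing :=
  fun a b c d hab hcd hac hcb hbd => T.noncross a b c d hab hcd (Or.inl ⟨hac, hcb, hbd⟩)

theorem adj_of_uncrossed (T : MaxOuterplanar n) {a b : Fin n} (hab : a < b)
    (h : ∀ c d, T.graph.Adj c d → a < c → c < b → d < a ∨ b < d → False) : T.graph.Adj a b := by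
  classical
  by_contra hnab
  have hG : (T.graph ⊔ edge a b).IsNoncrossing := by
    intro p q r s hpq hrs hpr hrq hqs
    rw [sup_adj, edge_adj] at hpq hrs
    rcases hpq with hpq | ⟨⟨rfl, rfl⟩ | ⟨rfl, rfl⟩, -⟩ <;>
      rcases hrs with hrs | ⟨⟨rfl, rfl⟩ | ⟨rfl, rfl⟩, -⟩ <;>
      first
      | exact T.isNoncrossing hpq hrs hpr hrq hqs
      | exact h _ _ hpq.symm hrq hqs (Or.inl hpr)
      | exact h _ _ hrs hpr hrq (Or.inr hqs)
      | order
  have := hG.card_edgeFinset_add_three_le (S := Finset.univ) (fun _ _ _ => Finset.mem_univ _)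
    (by simp only [Finset.card_univ, Fintype.card_fin]; omega)
  rw [← Set.ncard_coe_finset, coe_edgeFinset, edgeSet_sup, edgeSet_edge_of_ne hab.ne,
    Set.union_singleton, Set.ncard_insert_of_notMem (mt T.graph.mem_edgeSet.1 hnab), T.maximal,
    Finset.card_univ, Fintype.card_fin] at this
  omega

def rotate (T : MaxOuterplanar n) (v : Fin n) : MaxOuterplanar n where
  graph := T.graph.comap (Equiv.addRight v)
  boundary i := by simpa [add_right_comm] using T.boundary (i + v)
  noncross a b c d hab hcd hcr := by
    rcases hcr.add v with h | h | h | h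
    exacts [T.noncross _ _ _ _ hab hcd h, T.noncross _ _ _ _ hab.symm hcd h,
      T.noncross _ _ _ _ hab hcd.symm h, T.noncross _ _ _ _ hab.symm hcd.symm h]
  maximal := (ncard_edgeSet_comap _ _).trans T.maximal

theorem deg_rotate (T : MaxOuterplanar n) (v x : Fin n) :
    deg (T.rotate v).graph x = deg T.graph (x + v) :=
  deg_comap _ _ _

theorem comap_rotate_graph (T : MaxOuterplanar n) (v : Fin n) :
    (T.rotate v).graph.comap (Equiv.addRight (-v)) = T.graph := by
  ext
  simp [rotate]

def replaceEdge (T : MaxOuterplanar n) {x y z w : Fin n} (hxy : T.graph.Adj x y)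
    (hzw : ¬T.graph.Adj z w) (hcross : Crossing z w x y)
    (honly : ∀ c d, T.graph.Adj c d → Crossing z w c d → s(c, d) = s(x, y)) :
    MaxOuterplanar n where
  graph := T.graph.replaceEdge s(x, y) s(z, w)
  boundary i := replaceEdge_adj.2 (Or.inl ⟨T.boundary i, fun h => hcross.ne_boundary i h.symm⟩)
  noncross p q r s hpq hrs hcr := by
    have hzw := hcross.lt_left
    rw [replaceEdge_adj] at hpq hrs
    rcases hpq with ⟨hpq, hpq'⟩ | ⟨hpq, -⟩ <;> rcases hrs with ⟨hrs, hrs'⟩ | ⟨hrs, -⟩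
    · exact T.noncross p q r s hpq hrs hcr
    · obtain ⟨rfl, rfl⟩ := Sym2.eq_of_lt hrs hcr.lt_right hzw
      exact hpq' (honly p q hpq hcr.symm)
    · obtain ⟨rfl, rfl⟩ := Sym2.eq_of_lt hpq hcr.lt_left hzw
      exact hrs' (honly r s hrs hcr)
    · obtain ⟨rfl, rfl⟩ := Sym2.eq_of_lt hpq hcr.lt_left hzw
      obtain ⟨rfl, rfl⟩ := Sym2.eq_of_lt hrs hcr.lt_right hzw
      exact Crossing.not_self _ _ hcr
  maximal := by rw [ncard_edgeSet_replaceEdge hxy hcross.lt_left.ne hzw, T.maximal]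

theorem exists_fan_gap (T : MaxOuterplanar n) {u : Fin n} (hu0 : u ≠ 0) (hu : ¬T.graph.Adj 0 u) :
    ∃ a b, 0 < a ∧ a < u ∧ u < b ∧ T.graph.Adj 0 a ∧ T.graph.Adj 0 b ∧ T.graph.Adj a b ∧
      ∀ c, a < c → c < b → ¬T.graph.Adj 0 c := by
  have hlast : T.graph.Adj 0 (-1) := by simpa using (T.boundary (-1)).symm
  have h1 : (0 + 1 : Fin n) < u := by
    have hne : (0 + 1 : Fin n) ≠ u := fun h => hu (h ▸ T.boundary 0)
    have h0 : (0 : Fin n).val = 0 := Fin.val_zero _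
    simp only [Fin.lt_def, Ne, Fin.ext_iff, Fin.val_add_one_eq_ite] at hne hu0 ⊢
    split_ifs at hne ⊢ <;> omega
  have h2 : u < -1 := by
    have hne : u ≠ -1 := fun h => hu (h ▸ hlast)
    have h := Fin.val_add_one_eq_ite (-1 : Fin n)
    rw [neg_add_cancel, Fin.val_zero] at h
    have := u.isLt
    simp only [Fin.lt_def, Ne, Fin.ext_iff] at hne ⊢
    split_ifs at h
    omega
  obtain ⟨a, b, h0a, h0b, hau, hub, hgap⟩ :=
    exists_consecutive_around (P := T.graph.Adj 0) (T.boundary 0) hlast h1 h2 hu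
  have ha0 : 0 < a := (Fin.zero_le a).lt_of_ne (T.graph.ne_of_adj h0a)
  refine ⟨a, b, ha0, hau, hub, h0a, h0b, T.adj_of_uncrossed (hau.trans hub) ?_, hgap⟩
  rintro c d hcd hac hcb (hda | hbd)
  · rcases (Fin.zero_le d).eq_or_lt with rfl | hd0
    · exact hgap c hac hcb hcd.symm
    · exact T.isNoncrossing h0a hcd.symm hd0 hda hac
  · exact T.isNoncrossing h0b hcd (ha0.trans hac) hcb hbd

theorem exists_apex (T : MaxOuterplanar n) {a u b : Fin n} (hab : T.graph.Adj a b) (hau : a < u)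
    (hub : u < b) : ∃ w, a < w ∧ w < b ∧ T.graph.Adj a w ∧ T.graph.Adj w b ∧
      ∀ c, w < c → c < b → ¬T.graph.Adj a c := by
  have h1 : a < a + 1 ∧ a + 1 < b := by
    simp only [Fin.lt_def, Fin.val_add_one_eq_ite] at hau hub ⊢
    have := b.isLt
    split_ifs <;> omega
  obtain ⟨w, hadj_aw, hw1, hwb, hwmax⟩ :=
    exists_last_lt (P := T.graph.Adj a) (T.boundary a) h1.2
  have haw : a < w := h1.1.trans_le hw1
  refine ⟨w, haw, hwb, hadj_aw, T.adj_of_uncrossed hwb ?_, hwmax⟩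
  rintro c d hcd hwc hcb (hdw | hbd)
  · rcases lt_trichotomy d a with hda | rfl | had
    · exact T.isNoncrossing hcd.symm hab hda (haw.trans hwc) hcb
    · exact hwmax c hwc hcb hcd.symm
    · exact T.isNoncrossing hadj_aw hcd.symm had hdw hwc
  · exact T.isNoncrossing hab hcd (haw.trans hwc) hcb hbd

theorem exists_flip_zero (T : MaxOuterplanar n) (hdeg : deg T.graph 0 < n - 1) :
    ∃ T' : MaxOuterplanar n, IsFlipG T.graph T'.graph ∧ deg T'.graph 0 = deg T.graph 0 + 1 := by
  obtain ⟨u, hu0, hu⟩ : ∃ u, u ≠ 0 ∧ ¬T.graph.Adj 0 u := by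
    by_contra! h
    have := dominant_iff_deg_eq.1 h
    rw [Nat.card_fin] at this
    omega
  obtain ⟨a, b, ha0, hau, hub, h0a, h0b, hab, hgap⟩ := T.exists_fan_gap hu0 hu
  obtain ⟨w, haw, hwb, hadj_aw, hadj_wb, hwmax⟩ := T.exists_apex hab hau hub
  have h0w : ¬T.graph.Adj 0 w := hgap w haw hwb
  have honly : ∀ c d, T.graph.Adj c d → Crossing 0 w c d → s(c, d) = s(a, b) := by
    rintro c d hcd (⟨h0c, hcw, hwd⟩ | ⟨hc0, -, -⟩)
    · rcases lt_trichotomy c a with hca | rfl | hac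
      · exact (T.isNoncrossing h0a hcd h0c hca (haw.trans hwd)).elim
      · rcases lt_trichotomy d b with hdb | rfl | hbd
        · exact (hwmax d hwd hdb hcd).elim
        · rfl
        · exact (T.isNoncrossing h0b hcd ha0 (hau.trans hub) hbd).elim
      · exact (T.isNoncrossing hadj_aw hcd hac hcw hwd).elim
    · exact ((Fin.zero_le c).not_gt hc0).elim
  refine ⟨T.replaceEdge hab h0w (Or.inl ⟨ha0, haw, hwb⟩) honly,
    ⟨a, b, 0, w, hab, h0a.symm, h0b.symm, hadj_aw, hadj_wb.symm, (ha0.trans haw).ne, h0w, rfl⟩, ?_⟩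
  have h0ab : (0 : Fin n) ∉ s(a, b) := by
    rw [Sym2.mem_iff]
    rintro (rfl | rfl) <;> order
  change deg (T.graph.replaceEdge s(a, b) s(0, w)) 0 = _
  rw [deg, neighborSet_replaceEdge_of_notMem h0ab (ha0.trans haw).ne,
    Set.ncard_insert_of_notMem (mt (T.graph.mem_neighborSet 0 w).1 h0w), deg]

theorem exists_flip_deg_succ (T : MaxOuterplanar n) {v : Fin n} (hdeg : deg T.graph v < n - 1) :
    ∃ T' : MaxOuterplanar n, IsFlipG T.graph T'.graph ∧ deg T'.graph v = deg T.graph v + 1 := by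
  obtain ⟨R, hR, hdegR⟩ := (T.rotate v).exists_flip_zero (by rwa [deg_rotate, zero_add])
  refine ⟨R.rotate (-v), ?_, ?_⟩
  · have := hR.comap (Equiv.addRight (-v))
    rwa [comap_rotate_graph] at this
  · rw [deg_rotate, add_neg_cancel, hdegR, deg_rotate, zero_add]

theorem exists_reachableG_dominant (T : MaxOuterplanar n) (v : Fin n) :
    ∃ G', ReachableG T.graph G' (n - 1 - deg T.graph v) ∧ Dominant G' v := by
  induction hk : n - 1 - deg T.graph v generalizing T with
  | zero =>
    refine ⟨T.graph, ReachableG.refl _, dominant_iff_deg_eq.2 ?_⟩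
    have := deg_le_card_sub_one T.graph v
    rw [Nat.card_fin] at this ⊢
    omega
  | succ k ih =>
    obtain ⟨T', hflip, hdeg⟩ := T.exists_flip_deg_succ (v := v) (by omega)
    obtain ⟨G', hG', hdom⟩ := ih T' (by omega)
    exact ⟨G', ReachableG.cons hflip hG', hdom⟩

end MaxOuterplanar

theorem maxOuterplanar_dominant_flips_general (n : ℕ) [NeZero n]
    (T : MaxOuterplanar n) (v : Fin n) :
    (∃ G' : SimpleGraph (Fin n),
        ReachableG T.graph G' (n - 1 - deg T.graph v) ∧ Dominant G' v) ∧
    (∀ (k : ℕ) (G' : SimpleGraph (Fin n)),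
        ReachableG T.graph G' k → Dominant G' v → n - 1 - deg T.graph v ≤ k) := by
  refine ⟨T.exists_reachableG_dominant v, fun k G' hreach hdom => ?_⟩
  have hdeg := hreach.deg_le v
  rw [dominant_iff_deg_eq, Nat.card_fin] at hdom
  omega

/-- In any maximal outerplanar graph on `n ≥ 3` vertices, for any vertex `v`,
exactly `n - 1 - deg v` edge flips are necessary and sufficient to make `v`
dominant. -/
theorem maxOuterplanar_dominant_flips (n : ℕ) [NeZero n] (hn : 3 ≤ n)
    (T : MaxOuterplanar n) (v : Fin n) :
    (∃ G' : SimpleGraph (Fin n),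
        ReachableG T.graph G' (n - 1 - deg T.graph v) ∧ Dominant G' v) ∧
    (∀ (k : ℕ) (G' : SimpleGraph (Fin n)),
        ReachableG T.graph G' k → Dominant G' v → n - 1 - deg T.graph v ≤ k) :=
  maxOuterplanar_dominant_flips_general n T v
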